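/- arXiv:2208.14423 — 5 statements merged into one kernel-verified Lean document; each statement's English description precedes it below -/
import Mathlib

section
/- Suppose each algorithm A in a class 𝒜 has a reward function R_A : {1,...,N} → ℝ that is either strictly increasing or constant. If two platforms choose algorithms A₁, A₂ with max(R_{A₁}(N), R_{A₂}(N)) < sup_{A ∈ 𝒜} R_A(1), and the supremum is attained by some A* ∈ 𝒜, then (A₁, A₂) is not a Nash equilibrium of the platform game where each platform's utility is the minimum, over pure user equilibria, of the number of users it receives. -/
open Finset

/-- Number of users choosing platform 1 (encoded as `false`). -/
def count1 {N : ℕ} (p : Fin N → Bool) : ℕ := (univ.filter fun i => p i = false).card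

/-- Number of users choosing platform 2 (encoded as `true`). -/
def count2 {N : ℕ} (p : Fin N → Bool) : ℕ := (univ.filter fun i => p i = true).card

/-- Utility of user `i`: reward of their platform evaluated at that platform's user count. -/
def util {N : ℕ} (R1 R2 : ℕ → ℝ) (p : Fin N → Bool) (i : Fin N) : ℝ :=
  if p i then R2 (count2 p) else R1 (count1 p)

/-- Pure-strategy Nash equilibrium of the user platform-choice game. -/
def userNash {N : ℕ} (R1 R2 : ℕ → ℝ) (p : Fin N → Bool) : Prop :=
  ∀ i, util R1 R2 (Function.update p i (!(p i))) i ≤ util R1 R2 p i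

/-- `R` is strictly increasing on `{1,...,N}`. -/
def StrictIncrOn (R : ℕ → ℝ) (N : ℕ) : Prop :=
  ∀ m n, 1 ≤ m → m < n → n ≤ N → R m < R n

/-- `R` is constant on `{1,...,N}`. -/
def ConstOn (R : ℕ → ℝ) (N : ℕ) : Prop :=
  ∀ m n, 1 ≤ m → m ≤ N → 1 ≤ n → n ≤ N → R m = R n

/-- The set of pure user Nash equilibria when platforms run algorithms `A1`, `A2`. -/
def userEq (N : ℕ) {𝒜 : Type*} (R : 𝒜 → ℕ → ℝ) (A1 A2 : 𝒜) : Set (Fin N → Bool) :=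
  {p | userNash (R A1) (R A2) p}

/-- Platform 1's utility: minimum number of its users over pure user equilibria. -/
noncomputable def v1 (N : ℕ) {𝒜 : Type*} (R : 𝒜 → ℕ → ℝ) (A1 A2 : 𝒜) : ℕ :=
  sInf (count1 '' userEq N R A1 A2)

/-- Platform 2's utility: minimum number of its users over pure user equilibria. -/
noncomputable def v2 (N : ℕ) {𝒜 : Type*} (R : 𝒜 → ℕ → ℝ) (A1 A2 : 𝒜) : ℕ :=
  sInf (count2 '' userEq N R A1 A2)

/-- `(A1, A2)` is a pure Nash equilibrium of the platform game. -/
def platformNash (N : ℕ) {𝒜 : Type*} (R : 𝒜 → ℕ → ℝ) (A1 A2 : 𝒜) : Prop :=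
  (∀ A, v1 N R A A2 ≤ v1 N R A1 A2) ∧ (∀ A, v2 N R A1 A ≤ v2 N R A1 A2)

/-- User quality level: minimum user utility over pure user equilibria and users. -/
noncomputable def Q (N : ℕ) {𝒜 : Type*} (R : 𝒜 → ℕ → ℝ) (A1 A2 : 𝒜) : ℝ :=
  sInf {u | ∃ p ∈ userEq N R A1 A2, ∃ i, util (R A1) (R A2) p i = u}

/-! A platform that switches to `Astar` attracts every user in every user equilibrium: rewards
are monotone and `Astar`'s single-user reward already beats the other platform's reward with all
`N` users. So at a platform equilibrium both platforms would keep all `N ≥ 1` users in their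
worst-case equilibrium, whereas the two worst-case counts always sum to at most `N`. -/

open Function

section UserGame

variable {N : ℕ}

lemma card_filter_update_of_ne {α β : Type*} [Fintype α] [DecidableEq α] [DecidableEq β]
    (f : α → β) {i : α} {b : β} (h : f i ≠ b) :
    #{j | update f i b j = b} = #{j | f j = b} + 1 := by
  have : (univ.filter fun j => update f i b j = b) = insert i (univ.filter fun j => f j = b) := by
    ext j
    by_cases hj : j = i
    · subst hj; simp
    · simp [hj]
  rw [this, card_insert_of_notMem (by simpa using h)]

lemma count1_update_false (p : Fin N → Bool) {i : Fin N} (h : p i = true) :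
    count1 (update p i false) = count1 p + 1 :=
  card_filter_update_of_ne p (by simp [h])

lemma count2_update_true (p : Fin N → Bool) {i : Fin N} (h : p i = false) :
    count2 (update p i true) = count2 p + 1 :=
  card_filter_update_of_ne p (by simp [h])

lemma count1_add_count2 (p : Fin N → Bool) : count1 p + count2 p = N := by
  have h := card_filter_add_card_filter_not (s := (univ : Finset (Fin N))) (p · = false)
  simpa [count1, count2] using h

lemma one_le_count2 (p : Fin N → Bool) {i : Fin N} (h : p i = true) : 1 ≤ count2 p :=
  card_pos.mpr ⟨i, by simp [h]⟩

lemma count1_const_false : count1 (fun _ : Fin N => false) = N := by simp [count1]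

lemma count2_const_false : count2 (fun _ : Fin N => false) = 0 := by simp [count2]

lemma count2_const_true : count2 (fun _ : Fin N => true) = N := by simp [count2]

lemma count1_not (p : Fin N → Bool) : count1 (fun i => !p i) = count2 p := by
  simp [count1, count2]

lemma count2_not (p : Fin N → Bool) : count2 (fun i => !p i) = count1 p := by
  simp [count1, count2]

lemma util_not (R1 R2 : ℕ → ℝ) (p : Fin N → Bool) (i : Fin N) :
    util R2 R1 (fun j => !p j) i = util R1 R2 p i := by
  cases h : p i <;> simp [util, h, count1_not, count2_not]

lemma userNash_not_iff {R1 R2 : ℕ → ℝ} {p : Fin N → Bool} :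
    userNash R2 R1 (fun j => !p j) ↔ userNash R1 R2 p := by
  refine forall_congr' fun i => ?_
  have : update (fun j => !p j) i (!!p i) = fun j => !update p i (!p i) j := by
    funext j
    by_cases hj : j = i
    · subst hj; simp
    · simp [hj]
  rw [this, util_not, util_not]

lemma StrictIncrOn.monotoneOn {R : ℕ → ℝ} (h : StrictIncrOn R N) :
    MonotoneOn R (Set.Icc 1 N) := by
  intro m hm n hn hmn
  rcases hmn.eq_or_lt with rfl | hlt
  · exact le_rfl
  · exact (h m n hm.1 hlt hn.2).le

lemma ConstOn.monotoneOn {R : ℕ → ℝ} (h : ConstOn R N) : MonotoneOn R (Set.Icc 1 N) :=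
  fun m hm n hn _ => (h m n hm.1 hm.2 hn.1 hn.2).le

variable {R1 R2 : ℕ → ℝ}

lemma userNash_iff_eq_false (hN : 1 ≤ N) (h1 : MonotoneOn R1 (Set.Icc 1 N))
    (h2 : MonotoneOn R2 (Set.Icc 1 N)) (hlt : R2 N < R1 1) {p : Fin N → Bool} :
    userNash R1 R2 p ↔ p = fun _ => false := by
  constructor
  · intro hp
    funext i
    by_contra hi
    rw [Bool.not_eq_false] at hi
    have hdev := hp i
    simp only [util, hi, Bool.not_true, update_self, Bool.false_eq_true, if_false, if_true,
      count1_update_false p hi] at hdev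
    have hsum := count1_add_count2 p
    have hpos := one_le_count2 p hi
    have hR1 : R1 1 ≤ R1 (count1 p + 1) := h1 ⟨le_rfl, hN⟩ ⟨by omega, by omega⟩ (by omega)
    have hR2 : R2 (count2 p) ≤ R2 N := h2 ⟨hpos, by omega⟩ ⟨hN, le_rfl⟩ (by omega)
    linarith
  · rintro rfl i
    simp only [util, Bool.not_false, update_self, Bool.false_eq_true, if_false, if_true,
      count2_update_true (fun _ : Fin N => false) (i := i) rfl, count2_const_false,
      count1_const_false]
    have hR1 : R1 1 ≤ R1 N := h1 ⟨le_rfl, hN⟩ ⟨hN, le_rfl⟩ hN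
    have hR2 : R2 1 ≤ R2 N := h2 ⟨le_rfl, hN⟩ ⟨hN, le_rfl⟩ hN
    linarith

lemma userNash_iff_eq_true (hN : 1 ≤ N) (h1 : MonotoneOn R1 (Set.Icc 1 N))
    (h2 : MonotoneOn R2 (Set.Icc 1 N)) (hlt : R1 N < R2 1) {p : Fin N → Bool} :
    userNash R1 R2 p ↔ p = fun _ => true := by
  rw [← userNash_not_iff, userNash_iff_eq_false hN h2 h1 hlt]
  constructor <;> intro h <;> funext i <;> simpa using congrFun h i

end UserGame

section PlatformGame

variable {N : ℕ} {𝒜 : Type*} (R : 𝒜 → ℕ → ℝ)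

lemma v1_add_v2_le (A1 A2 : 𝒜) : v1 N R A1 A2 + v2 N R A1 A2 ≤ N := by
  rcases (userEq N R A1 A2).eq_empty_or_nonempty with h | ⟨p, hp⟩
  · simp [v1, v2, h]
  · calc v1 N R A1 A2 + v2 N R A1 A2 ≤ count1 p + count2 p :=
          add_le_add (Nat.sInf_le ⟨p, hp, rfl⟩) (Nat.sInf_le ⟨p, hp, rfl⟩)
      _ = N := count1_add_count2 p

variable {A B : 𝒜}

lemma v1_eq_of_dominant (hN : 1 ≤ N) (hA : MonotoneOn (R A) (Set.Icc 1 N))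
    (hB : MonotoneOn (R B) (Set.Icc 1 N)) (hlt : R B N < R A 1) : v1 N R A B = N := by
  have : userEq N R A B = {fun _ => false} :=
    Set.ext fun _ => userNash_iff_eq_false hN hA hB hlt
  rw [v1, this, Set.image_singleton, count1_const_false, csInf_singleton]

lemma v2_eq_of_dominant (hN : 1 ≤ N) (hA : MonotoneOn (R A) (Set.Icc 1 N))
    (hB : MonotoneOn (R B) (Set.Icc 1 N)) (hlt : R B N < R A 1) : v2 N R B A = N := by
  have : userEq N R B A = {fun _ => true} :=
    Set.ext fun _ => userNash_iff_eq_true hN hB hA hlt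
  rw [v2, this, Set.image_singleton, count2_const_true, csInf_singleton]

end PlatformGame

theorem not_platformNash_of_both_suboptimal_general (N : ℕ) (hN : 1 ≤ N) {𝒜 : Type*}
    (R : 𝒜 → ℕ → ℝ)
    (hmono : ∀ A, StrictIncrOn (R A) N ∨ ConstOn (R A) N)
    (Astar : 𝒜)
    (A1 A2 : 𝒜) (hlt : max (R A1 N) (R A2 N) < R Astar 1) :
    ¬ platformNash N R A1 A2 := by
  have hmon A : MonotoneOn (R A) (Set.Icc 1 N) :=
    (hmono A).elim StrictIncrOn.monotoneOn ConstOn.monotoneOn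
  rintro ⟨hdev1, hdev2⟩
  have hv1 := hdev1 Astar
  have hv2 := hdev2 Astar
  rw [v1_eq_of_dominant R hN (hmon _) (hmon _) ((le_max_right _ _).trans_lt hlt)] at hv1
  rw [v2_eq_of_dominant R hN (hmon _) (hmon _) ((le_max_left _ _).trans_lt hlt)] at hv2
  have hsum := v1_add_v2_le (N := N) R A1 A2
  omega

/-- if both platforms' algorithms satisfy
`max (R A1 N) (R A2 N) < max_{A} R A 1` (the single-user optimum, attained by `Astar`),
then `(A1, A2)` is not a platform Nash equilibrium. -/
theorem not_platformNash_of_both_suboptimal (N : ℕ) (hN : 1 ≤ N) {𝒜 : Type*}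
    (R : 𝒜 → ℕ → ℝ)
    (hmono : ∀ A, StrictIncrOn (R A) N ∨ ConstOn (R A) N)
    (Astar : 𝒜) (hstar : ∀ A, R A 1 ≤ R Astar 1)
    (A1 A2 : 𝒜) (hlt : max (R A1 N) (R A2 N) < R Astar 1) :
    ¬ platformNash N R A1 A2 :=
  not_platformNash_of_both_suboptimal_general N hN R hmono Astar A1 A2 hlt
end

section
/- Suppose each algorithm in 𝒜 has a reward function that is either strictly increasing or constant in the number of users, and A ∈ 𝒜 satisfies R_A(N) ≥ sup_{A' ∈ 𝒜} R_{A'}(1). Then the symmetric profile (A, A) is a pure Nash equilibrium of the platform game, and every pure user equilibrium under (A,A) gives every user utility R_A(N). -/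
open Finset

lemma count_sum {N : ℕ} (p : Fin N → Bool) : count1 p + count2 p = N := by
  classical
  have h := Finset.card_filter_add_card_filter_not
      (s := (univ : Finset (Fin N))) (p := fun i => p i = false)
  simpa [count1, count2, Finset.card_univ, Bool.not_eq_false] using h

lemma count2_update {N : ℕ} (p : Fin N → Bool) (i : Fin N) (h : p i = false) :
    count2 (Function.update p i true) = count2 p + 1 := by
  classical
  unfold count2
  have hset : (univ.filter fun j => Function.update p i true j = true)
      = insert i (univ.filter fun j => p j = true) := by
    ext j
    by_cases hj : j = i <;> simp [Function.update_apply, hj, h]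
  rw [hset, Finset.card_insert_of_notMem (by simp [h])]

lemma count1_update {N : ℕ} (p : Fin N → Bool) (i : Fin N) (h : p i = true) :
    count1 (Function.update p i false) = count1 p + 1 := by
  classical
  unfold count1
  have hset : (univ.filter fun j => Function.update p i false j = false)
      = insert i (univ.filter fun j => p j = false) := by
    ext j
    by_cases hj : j = i <;> simp [Function.update_apply, hj, h]
  rw [hset, Finset.card_insert_of_notMem (by simp [h])]

lemma count1_pos {N : ℕ} (p : Fin N → Bool) (i : Fin N) (h : p i = false) :
    1 ≤ count1 p :=
  Finset.card_pos.mpr ⟨i, by simp [h]⟩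

lemma count2_pos {N : ℕ} (p : Fin N → Bool) (i : Fin N) (h : p i = true) :
    1 ≤ count2 p :=
  Finset.card_pos.mpr ⟨i, by simp [h]⟩

lemma count1_le {N : ℕ} (p : Fin N → Bool) : count1 p ≤ N := by
  simpa [count1] using Finset.card_filter_le (univ : Finset (Fin N)) (fun i => p i = false)

lemma count2_le {N : ℕ} (p : Fin N → Bool) : count2 p ≤ N := by
  simpa [count2] using Finset.card_filter_le (univ : Finset (Fin N)) (fun i => p i = true)

lemma nash_false {N : ℕ} {R1 R2 : ℕ → ℝ} {p : Fin N → Bool} (hp : userNash R1 R2 p)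
    (i : Fin N) (h : p i = false) : R2 (count2 p + 1) ≤ R1 (count1 p) := by
  have hi := hp i
  rw [h] at hi
  simpa [util, Function.update_self, count2_update p i h, h] using hi

lemma nash_true {N : ℕ} {R1 R2 : ℕ → ℝ} {p : Fin N → Bool} (hp : userNash R1 R2 p)
    (i : Fin N) (h : p i = true) : R1 (count1 p + 1) ≤ R2 (count2 p) := by
  have hi := hp i
  rw [h] at hi
  simpa [util, Function.update_self, count1_update p i h, h] using hi

lemma allTrue_nash {N : ℕ} (R1 R2 : ℕ → ℝ) (h : R1 1 ≤ R2 N) :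
    userNash R1 R2 (fun _ : Fin N => true) := by
  intro i
  have h0 : count1 (fun _ : Fin N => true) = 0 := by simp [count1]
  have hc1 : count1 (Function.update (fun _ : Fin N => true) i false) = 1 := by
    rw [count1_update _ _ rfl, h0]
  have hc2 : count2 (fun _ : Fin N => true) = N := by
    simp [count2, Finset.card_univ]
  simpa [util, Function.update_self, hc1, hc2] using h

lemma allFalse_nash {N : ℕ} (R1 R2 : ℕ → ℝ) (h : R2 1 ≤ R1 N) :
    userNash R1 R2 (fun _ : Fin N => false) := by
  intro i
  have h0 : count2 (fun _ : Fin N => false) = 0 := by simp [count2]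
  have hc2 : count2 (Function.update (fun _ : Fin N => false) i true) = 1 := by
    rw [count2_update _ _ rfl, h0]
  have hc1 : count1 (fun _ : Fin N => false) = N := by
    simp [count1, Finset.card_univ]
  simpa [util, Function.update_self, hc1, hc2] using h

lemma userEq_util_aux (N : ℕ) (RA : ℕ → ℝ)
    (hm : StrictIncrOn RA N ∨ ConstOn RA N)
    (p : Fin N → Bool) (hp : userNash RA RA p) (i : Fin N) :
    util RA RA p i = RA N := by
  have hsum := count_sum p
  rcases hm with hs | hc
  · -- strictly increasing: equilibria are all-on-one-platform
    have hsplit : count1 p = 0 ∨ count2 p = 0 := by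
      by_contra hcon
      push_neg at hcon
      obtain ⟨h1, h2⟩ := hcon
      have h1' : 1 ≤ count1 p := Nat.one_le_iff_ne_zero.mpr h1
      have h2' : 1 ≤ count2 p := Nat.one_le_iff_ne_zero.mpr h2
      obtain ⟨i0, hi0⟩ : ∃ j, p j = false := by
        obtain ⟨j, hj⟩ := Finset.card_pos.mp h1'
        exact ⟨j, by simpa using hj⟩
      obtain ⟨j0, hj0⟩ : ∃ j, p j = true := by
        obtain ⟨j, hj⟩ := Finset.card_pos.mp h2'
        exact ⟨j, by simpa using hj⟩
      have hA := nash_false hp i0 hi0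
      have hB := nash_true hp j0 hj0
      have hle1 : count2 p + 1 ≤ count1 p := by
        by_contra hlt
        push_neg at hlt
        exact absurd hA (not_le_of_gt (hs _ _ h1' hlt (by omega)))
      have hle2 : count1 p + 1 ≤ count2 p := by
        by_contra hlt
        push_neg at hlt
        exact absurd hB (not_le_of_gt (hs _ _ h2' hlt (by omega)))
      omega
    rcases hsplit with h0 | h0
    · have hpi : p i = true := by
        by_contra hpi
        have : p i = false := by simpa using hpi
        have := count1_pos p i this
        omega
      have : count2 p = N := by omega
      simp [util, hpi, this]
    · have hpi : p i = false := by
        by_contra hpi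
        have : p i = true := by simpa using hpi
        have := count2_pos p i this
        omega
      have : count1 p = N := by omega
      simp [util, hpi, this]
  · -- constant case
    by_cases hpi : p i = true
    · have h1 : 1 ≤ count2 p := count2_pos p i hpi
      have h2 : count2 p ≤ N := count2_le p
      have hNN : 1 ≤ N := le_trans h1 h2
      simp [util, hpi, hc (count2 p) N h1 h2 hNN le_rfl]
    · have hpi' : p i = false := by simpa using hpi
      have h1 : 1 ≤ count1 p := count1_pos p i hpi'
      have h2 : count1 p ≤ N := count1_le p
      have hNN : 1 ≤ N := le_trans h1 h2
      simp [util, hpi', hc (count1 p) N h1 h2 hNN le_rfl]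

/-- if `R A N ≥ sup_{A'} R A' 1`, then `(A, A)` is a platform Nash
equilibrium and every pure user equilibrium gives every user utility `R A N`. -/
theorem symmetric_platformNash (N : ℕ) (hN : 1 ≤ N) {𝒜 : Type*}
    (R : 𝒜 → ℕ → ℝ)
    (hmono : ∀ A', StrictIncrOn (R A') N ∨ ConstOn (R A') N)
    (A : 𝒜) (hge : ∀ A', R A' 1 ≤ R A N) :
    platformNash N R A A ∧
      ∀ p ∈ userEq N R A A, ∀ i, util (R A) (R A) p i = R A N := by
  have key : ∀ p ∈ userEq N R A A, ∀ i, util (R A) (R A) p i = R A N := by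
    intro p hp i
    exact userEq_util_aux N (R A) (hmono A) p hp i
  refine ⟨⟨?_, ?_⟩, key⟩
  · intro A'
    have hmem : (0 : ℕ) ∈ count1 '' userEq N R A' A :=
      ⟨fun _ => true, allTrue_nash _ _ (hge A'), by simp [count1]⟩
    exact (Nat.sInf_le hmem).trans (Nat.zero_le _)
  · intro A'
    have hmem : (0 : ℕ) ∈ count2 '' userEq N R A A' :=
      ⟨fun _ => false, allFalse_nash _ _ (hge A'), by simp [count2]⟩
    exact (Nat.sInf_le hmem).trans (Nat.zero_le _)
end

section
/- In the single-user case (N = 1), a pair of algorithms (A₁, A₂) is a platform Nash equilibrium if and only if R_{A₁}(1) = max_{A∈𝒜} R_A(1) or R_{A₂}(1) = max_{A∈𝒜} R_A(1); moreover, at any such equilibrium the user quality level equals max_{A∈𝒜} R_A(1). -/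
open Finset

lemma p_cases (p : Fin 1 → Bool) : p = (fun _ => false) ∨ p = (fun _ => true) := by
  cases h : p 0 with
  | false => left; funext x; rw [Subsingleton.elim x 0, h]
  | true => right; funext x; rw [Subsingleton.elim x 0, h]

lemma count1_pf : count1 (fun _ : Fin 1 => false) = 1 := by decide
lemma count2_pt : count2 (fun _ : Fin 1 => true) = 1 := by decide
lemma count1_pt : count1 (fun _ : Fin 1 => true) = 0 := by decide
lemma count2_pf : count2 (fun _ : Fin 1 => false) = 0 := by decide

lemma util_pf (R1 R2 : ℕ → ℝ) (i : Fin 1) : util R1 R2 (fun _ => false) i = R1 1 := by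
  simp [util, count1_pf]

lemma util_pt (R1 R2 : ℕ → ℝ) (i : Fin 1) : util R1 R2 (fun _ => true) i = R2 1 := by
  simp [util, count2_pt]

lemma update_pf (i : Fin 1) :
    Function.update (fun _ : Fin 1 => false) i (!(false)) = (fun _ => true) := by
  funext x; rw [Subsingleton.elim x i]; simp

lemma update_pt (i : Fin 1) :
    Function.update (fun _ : Fin 1 => true) i (!(true)) = (fun _ => false) := by
  funext x; rw [Subsingleton.elim x i]; simp

lemma nash_pf (R1 R2 : ℕ → ℝ) : userNash R1 R2 (fun _ : Fin 1 => false) ↔ R2 1 ≤ R1 1 := by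
  constructor
  · intro h; have := h 0; rwa [update_pf, util_pf, util_pt] at this
  · intro h i; rw [update_pf, util_pf, util_pt]; exact h

lemma nash_pt (R1 R2 : ℕ → ℝ) : userNash R1 R2 (fun _ : Fin 1 => true) ↔ R1 1 ≤ R2 1 := by
  constructor
  · intro h; have := h 0; rwa [update_pt, util_pt, util_pf] at this
  · intro h i; rw [update_pt, util_pt, util_pf]; exact h

lemma v1_eq {𝒜 : Type*} (R : 𝒜 → ℕ → ℝ) (A1 A2 : 𝒜) :
    v1 1 R A1 A2 = if R A2 1 < R A1 1 then 1 else 0 := by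
  unfold v1
  split
  · rename_i h
    have himg : count1 '' userEq 1 R A1 A2 = {1} := by
      ext n
      constructor
      · rintro ⟨p, hp, rfl⟩
        rcases p_cases p with rfl | rfl
        · exact count1_pf
        · exact absurd ((nash_pt _ _).mp hp) (not_le.mpr h)
      · rintro rfl
        exact ⟨fun _ => false, (nash_pf _ _).mpr h.le, count1_pf⟩
    rw [himg, csInf_singleton]
  · rename_i h
    rw [Nat.sInf_eq_zero]
    left
    exact ⟨fun _ => true, (nash_pt _ _).mpr (not_lt.mp h), count1_pt⟩

lemma v2_eq {𝒜 : Type*} (R : 𝒜 → ℕ → ℝ) (A1 A2 : 𝒜) :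
    v2 1 R A1 A2 = if R A1 1 < R A2 1 then 1 else 0 := by
  unfold v2
  split
  · rename_i h
    have himg : count2 '' userEq 1 R A1 A2 = {1} := by
      ext n
      constructor
      · rintro ⟨p, hp, rfl⟩
        rcases p_cases p with rfl | rfl
        · exact absurd ((nash_pf _ _).mp hp) (not_le.mpr h)
        · exact count2_pt
      · rintro rfl
        exact ⟨fun _ => true, (nash_pt _ _).mpr h.le, count2_pt⟩
    rw [himg, csInf_singleton]
  · rename_i h
    rw [Nat.sInf_eq_zero]
    left
    exact ⟨fun _ => false, (nash_pf _ _).mpr (not_lt.mp h), count2_pf⟩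

/-- single-user case. `(A1, A2)` is a platform Nash equilibrium iff one of
the platforms plays a single-user optimal algorithm; at any such equilibrium the user
quality level equals the single-user optimum. -/
theorem single_user_idealized_alignment {𝒜 : Type*}
    (R : 𝒜 → ℕ → ℝ)
    (Amax : 𝒜) (hmax : ∀ A, R A 1 ≤ R Amax 1)
    (A1 A2 : 𝒜) :
    (platformNash 1 R A1 A2 ↔ (R A1 1 = R Amax 1 ∨ R A2 1 = R Amax 1)) ∧
      (platformNash 1 R A1 A2 → Q 1 R A1 A2 = R Amax 1) := by
  have hiff : platformNash 1 R A1 A2 ↔ (R A1 1 = R Amax 1 ∨ R A2 1 = R Amax 1) := by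
    constructor
    · intro hN
      by_contra hc
      push_neg at hc
      have h1 : R A1 1 < R Amax 1 := lt_of_le_of_ne (hmax A1) hc.1
      have h2 : R A2 1 < R Amax 1 := lt_of_le_of_ne (hmax A2) hc.2
      rcases lt_or_ge (R A2 1) (R A1 1) with h | h
      · have := hN.2 Amax
        rw [v2_eq, v2_eq, if_pos h1, if_neg (not_lt.mpr h.le)] at this
        omega
      · have := hN.1 Amax
        rw [v1_eq, v1_eq, if_pos h2, if_neg (not_lt.mpr h)] at this
        omega
    · intro h
      constructor
      · intro A
        rw [v1_eq, v1_eq]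
        by_cases h12 : R A2 1 < R A1 1
        · rw [if_pos h12]; split <;> omega
        · rw [if_neg h12]
          have hA2 : R A2 1 = R Amax 1 := by
            rcases h with h | h
            · exact le_antisymm (hmax A2) (h ▸ not_lt.mp h12)
            · exact h
          rw [if_neg (not_lt.mpr (hA2 ▸ hmax A))]
      · intro A
        rw [v2_eq, v2_eq]
        by_cases h12 : R A1 1 < R A2 1
        · rw [if_pos h12]; split <;> omega
        · rw [if_neg h12]
          have hA1 : R A1 1 = R Amax 1 := by
            rcases h with h | h
            · exact h
            · exact le_antisymm (hmax A1) (h ▸ not_lt.mp h12)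
          rw [if_neg (not_lt.mpr (hA1 ▸ hmax A))]
  refine ⟨hiff, fun hN => ?_⟩
  have h := hiff.mp hN
  have hS : {u | ∃ p ∈ userEq 1 R A1 A2, ∃ i, util (R A1) (R A2) p i = u}
      = {R Amax 1} := by
    ext u
    simp only [Set.mem_setOf_eq, Set.mem_singleton_iff]
    constructor
    · rintro ⟨p, hp, i, rfl⟩
      rcases p_cases p with rfl | rfl
      · rw [util_pf]
        have h21 : R A2 1 ≤ R A1 1 := (nash_pf _ _).mp hp
        rcases h with h | h
        · exact h
        · exact le_antisymm (hmax A1) (h ▸ h21)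
      · rw [util_pt]
        have h12 : R A1 1 ≤ R A2 1 := (nash_pt _ _).mp hp
        rcases h with h | h
        · exact le_antisymm (hmax A2) (h ▸ h12)
        · exact h
    · rintro rfl
      rcases h with h | h
      · exact ⟨fun _ => false, (nash_pf _ _).mpr (h ▸ hmax A2), 0, (util_pf _ _ 0).trans h⟩
      · exact ⟨fun _ => true, (nash_pt _ _).mpr (h ▸ hmax A1), 0, (util_pt _ _ 0).trans h⟩
  rw [Q, hS, csInf_singleton]
end

section
/- In the shared-data setting, the symmetric algorithm profile (A, A) is a Nash equilibrium of the two-platform game if and only if A is a symmetric pure strategy Nash equilibrium of the N-player game G in which each player chooses an algorithm in 𝒜 and receives utility U(A_i; A_{-i}) depending on the full algorithm profile. -/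
open Finset

/-- The multiset of algorithms played by the users other than `i`, when user `k`'s
algorithm is `q k`. -/
def others {N : ℕ} {𝒜 : Type*} (q : Fin N → 𝒜) (i : Fin N) : Multiset 𝒜 :=
  (univ.erase i).val.map q

/-- Shared-data utility of user `i` when the platforms run `A1`, `A2` and users choose
platforms according to `p` (`false` = platform 1): the utility depends only on the user's
own effective algorithm and the multiset of the other users' effective algorithms. -/
def utilShared {N : ℕ} {𝒜 : Type*} (U : 𝒜 → Multiset 𝒜 → ℝ)
    (A1 A2 : 𝒜) (p : Fin N → Bool) (i : Fin N) : ℝ :=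
  U (if p i then A2 else A1) (others (fun k => if p k then A2 else A1) i)

/-- Pure user Nash equilibrium in the shared-data platform-choice game. -/
def userNashShared {N : ℕ} {𝒜 : Type*} (U : 𝒜 → Multiset 𝒜 → ℝ)
    (A1 A2 : 𝒜) (p : Fin N → Bool) : Prop :=
  ∀ i, utilShared U A1 A2 (Function.update p i (!(p i))) i ≤ utilShared U A1 A2 p i

/-- The set of pure user Nash equilibria. -/
def userEqShared (N : ℕ) {𝒜 : Type*} (U : 𝒜 → Multiset 𝒜 → ℝ) (A1 A2 : 𝒜) :
    Set (Fin N → Bool) :=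
  {p | userNashShared U A1 A2 p}

/-- Platform 1's utility: minimum user count over pure user equilibria. -/
noncomputable def v1Shared (N : ℕ) {𝒜 : Type*} (U : 𝒜 → Multiset 𝒜 → ℝ) (A1 A2 : 𝒜) : ℕ :=
  sInf ((fun p => (univ.filter fun i => p i = false).card) '' userEqShared N U A1 A2)

/-- Platform 2's utility: minimum user count over pure user equilibria. -/
noncomputable def v2Shared (N : ℕ) {𝒜 : Type*} (U : 𝒜 → Multiset 𝒜 → ℝ) (A1 A2 : 𝒜) : ℕ :=
  sInf ((fun p => (univ.filter fun i => p i = true).card) '' userEqShared N U A1 A2)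

/-- `(A1, A2)` is a pure Nash equilibrium of the shared-data platform game. -/
def platformNashShared (N : ℕ) {𝒜 : Type*} (U : 𝒜 → Multiset 𝒜 → ℝ) (A1 A2 : 𝒜) : Prop :=
  (∀ A, v1Shared N U A A2 ≤ v1Shared N U A1 A2) ∧
    (∀ A, v2Shared N U A1 A ≤ v2Shared N U A1 A2)

/-- `A` is a symmetric pure strategy Nash equilibrium of the `N`-player game `G`:
no player can improve by unilaterally deviating from the all-`A` profile. -/
def symEqG (N : ℕ) {𝒜 : Type*} (U : 𝒜 → Multiset 𝒜 → ℝ) (A : 𝒜) : Prop :=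
  ∀ A', U A' (Multiset.replicate (N - 1) A) ≤ U A (Multiset.replicate (N - 1) A)

/-!
At `(A', A)` the profile sending every user to platform 2 is a user equilibrium exactly when
no user gains by switching from the all-`A` state to `A'`, i.e. when `A'` does not beat `A` in
`G`. Platform 1's value `v₁(A', A)` is `0` precisely when this profile is an equilibrium, since
the set of user equilibria is never empty (a symmetric two-action game has an exact potential);
otherwise the `sInf ∅ = 0` convention would spoil this. At `(A, A)` that profile is trivially an
equilibrium, so `v₁(A, A) = 0` and platform 1 cannot improve iff `v₁(A', A) = 0` for all `A'`.
Conversely, if `A` is a symmetric equilibrium of `G`, a deviating platform attracts nobody in the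
equilibrium where all users stay with `A`, so its value is `0`.
-/

namespace Multiset

theorem map_bool_eq_replicate_add_replicate {α : Type*} (f : Bool → α) (s : Multiset Bool) :
    s.map f = replicate (s.count false) (f false) + replicate (card s - s.count false) (f true) := by
  induction s using Multiset.induction_on with
  | empty => simp
  | cons b s ih =>
    have hle := s.count_le_card false
    cases b
    · simp [ih, replicate_succ, Nat.succ_sub_succ]
    · rw [map_cons, ih, count_cons_of_ne Bool.false_ne_true, card_cons,
        Nat.sub_add_comm hle, replicate_succ, add_cons]

end Multiset

theorem Nat.sInf_image_eq_zero_iff {α : Type*} {s : Set α} (hs : s.Nonempty) (f : α → ℕ) :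
    sInf (f '' s) = 0 ↔ ∃ a ∈ s, f a = 0 := by
  rw [Nat.sInf_eq_zero, or_iff_left (hs.image f).ne_empty, Set.mem_image]

section Others

variable {N : ℕ} {𝒜 : Type*}

theorem card_others (q : Fin N → 𝒜) (i : Fin N) : Multiset.card (others q i) = N - 1 := by
  simp [others]

theorem others_const (a : 𝒜) (i : Fin N) :
    others (fun _ => a) i = Multiset.replicate (N - 1) a := by
  simp [others, Multiset.map_const']

theorem others_congr {q q' : Fin N → 𝒜} (i : Fin N) (h : ∀ j ≠ i, q j = q' j) :
    others q i = others q' i :=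
  Multiset.map_congr rfl fun j hj => h j (ne_of_mem_erase (mem_val.mp hj))

theorem others_update_self (q : Fin N → 𝒜) (i : Fin N) (a : 𝒜) :
    others (Function.update q i a) i = others q i :=
  others_congr i fun _ hj => Function.update_of_ne hj _ _

theorem others_comp {β : Type*} (f : 𝒜 → β) (q : Fin N → 𝒜) (i : Fin N) :
    others (f ∘ q) i = (others q i).map f :=
  (Multiset.map_map f q _).symm

theorem map_univ_val_eq_cons_others (q : Fin N → 𝒜) (i : Fin N) :
    univ.val.map q = q i ::ₘ others q i := by
  rw [others, erase_val, ← Multiset.map_cons, Multiset.cons_erase (mem_univ_val i)]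

theorem others_ite_eq (A1 A2 : 𝒜) (p : Fin N → Bool) (i : Fin N) :
    others (fun k => if p k then A2 else A1) i =
      Multiset.replicate ((others p i).count false) A1 +
        Multiset.replicate (N - 1 - (others p i).count false) A2 := by
  rw [show (fun k => if p k then A2 else A1) = (fun b : Bool => if b then A2 else A1) ∘ p from rfl,
    others_comp, Multiset.map_bool_eq_replicate_add_replicate, card_others]
  simp

end Others

/-- `∑_{j < #false} (g false j - g true j)` is an exact potential. -/
theorem exists_stable_bool_profile {N : ℕ} (g : Bool → ℕ → ℝ) :
    ∃ p : Fin N → Bool, ∀ i,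
      g (!p i) ((others p i).count false) ≤ g (p i) ((others p i).count false) := by
  let F j := g false j - g true j
  let Φ : (Fin N → Bool) → ℝ := fun p => ∑ j ∈ range ((univ.val.map p).count false), F j
  have hΦ : ∀ p i, Φ p = ∑ j ∈ range ((others p i).count false), F j
      - g true ((others p i).count false) + g (p i) ((others p i).count false) := by
    intro p i
    simp only [Φ, map_univ_val_eq_cons_others p i]
    cases p i
    · simp only [Multiset.count_cons_self, sum_range_succ]
      ring
    · simp
  obtain ⟨p, hp⟩ := Finite.exists_max Φ
  refine ⟨p, fun i => ?_⟩
  have h := hp (Function.update p i (!p i))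
  rw [hΦ p i, hΦ _ i, Function.update_self, others_update_self] at h
  linarith

section Shared

variable {N : ℕ} {𝒜 : Type*} (U : 𝒜 → Multiset 𝒜 → ℝ) (A1 A2 : 𝒜)

theorem utilShared_update_self (p : Fin N → Bool) (i : Fin N) (b : Bool) :
    utilShared U A1 A2 (Function.update p i b) i =
      U (if b then A2 else A1) (others (fun k => if p k then A2 else A1) i) := by
  rw [utilShared, Function.update_self]
  congr 1
  exact others_congr i fun j hj => by rw [Function.update_of_ne hj]

theorem userEqShared_nonempty : (userEqShared N U A1 A2).Nonempty := by
  obtain ⟨p, hp⟩ := exists_stable_bool_profile (N := N) fun b m =>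
    U (if b then A2 else A1) (Multiset.replicate m A1 + Multiset.replicate (N - 1 - m) A2)
  refine ⟨p, fun i => ?_⟩
  have hself := utilShared_update_self U A1 A2 p i (p i)
  rw [Function.update_eq_self] at hself
  rw [hself, utilShared_update_self, others_ite_eq]
  exact hp i

theorem userNashShared_const_iff (hN : 0 < N) (b : Bool) :
    userNashShared U A1 A2 (fun _ : Fin N => b) ↔
      U (if !b then A2 else A1) (Multiset.replicate (N - 1) (if b then A2 else A1)) ≤
        U (if b then A2 else A1) (Multiset.replicate (N - 1) (if b then A2 else A1)) := by
  simp only [userNashShared, utilShared_update_self]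
  simp only [utilShared, others_const]
  exact ⟨fun h => h ⟨0, hN⟩, fun h _ => h⟩

theorem sInf_userCount_eq_zero_iff (b : Bool) :
    sInf ((fun p => (univ.filter fun i => p i = b).card) '' userEqShared N U A1 A2) = 0 ↔
      userNashShared U A1 A2 (fun _ : Fin N => !b) := by
  rw [Nat.sInf_image_eq_zero_iff (userEqShared_nonempty U A1 A2)]
  simp only [card_eq_zero, filter_eq_empty_iff, mem_univ, true_implies]
  constructor
  · rintro ⟨p, hp, hb⟩
    rwa [show p = fun _ => !b from funext fun i => Bool.eq_not.mpr (@hb i)] at hp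
  · exact fun h => ⟨_, h, by simp⟩

theorem v1Shared_eq_zero_iff :
    v1Shared N U A1 A2 = 0 ↔ userNashShared U A1 A2 (fun _ : Fin N => true) :=
  sInf_userCount_eq_zero_iff U A1 A2 false

theorem v2Shared_eq_zero_iff :
    v2Shared N U A1 A2 = 0 ↔ userNashShared U A1 A2 (fun _ : Fin N => false) :=
  sInf_userCount_eq_zero_iff U A1 A2 true

end Shared

/-- in the shared-data setting, `(A, A)` is a platform Nash equilibrium iff
`A` is a symmetric pure strategy Nash equilibrium of the `N`-player game `G`. -/
theorem shared_platformNash_iff_symEq (N : ℕ) (hN : 1 ≤ N) {𝒜 : Type*}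
    (U : 𝒜 → Multiset 𝒜 → ℝ) (A : 𝒜) :
    platformNashShared N U A A ↔ symEqG N U A := by
  constructor
  · rintro ⟨h1, -⟩ A'
    have hAA : v1Shared N U A A = 0 :=
      (v1Shared_eq_zero_iff U A A).mpr ((userNashShared_const_iff U A A hN true).mpr le_rfl)
    have hA'A : v1Shared N U A' A = 0 := Nat.eq_zero_of_le_zero (hAA ▸ h1 A')
    simpa using (userNashShared_const_iff U A' A hN true).mp ((v1Shared_eq_zero_iff U A' A).mp hA'A)
  · intro h
    refine ⟨fun A' => ?_, fun A' => ?_⟩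
    · rw [(v1Shared_eq_zero_iff U A' A).mpr ((userNashShared_const_iff U A' A hN true).mpr
        (by simpa using h A'))]
      exact Nat.zero_le _
    · rw [(v2Shared_eq_zero_iff U A A').mpr ((userNashShared_const_iff U A A' hN false).mpr
        (by simpa using h A'))]
      exact Nat.zero_le _
end

section
/- In the finite-horizon discrete-time risky-safe arm problem with a single user running ε-Thompson sampling (ε ∈ [0,1)), the expected cumulative discounted reward K(p), as a function of the prior probability p ∈ (0,1) that the risky arm is high, satisfies E[K(p')] > K(p), where p' is the random posterior obtained from p after observing one additional noisy sample of the risky arm. -/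
open MeasureTheory Real

/-- Unnormalized Gaussian likelihood of observing `x` when the mean is `m`. -/
noncomputable def lik (σ m x : ℝ) : ℝ := Real.exp (-(x - m) ^ 2 / (2 * σ ^ 2))

/-- Bayesian posterior that the risky arm is high after observing `x` from prior `p`. -/
noncomputable def post (σ h l p x : ℝ) : ℝ :=
  p * lik σ h x / (p * lik σ h x + (1 - p) * lik σ l x)

/-- Marginal density of an observation of the risky arm under prior `p`. -/
noncomputable def obsDens (σ h l p x : ℝ) : ℝ :=
  (p * lik σ h x + (1 - p) * lik σ l x) / Real.sqrt (2 * Real.pi * σ ^ 2)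

/-- Risky-arm pull probability of ε-Thompson sampling at posterior `q`. -/
noncomputable def fTS (ε q : ℝ) : ℝ := ε + (1 - ε) * q

/-- Expected cumulative `β`-discounted reward of a single user running ε-Thompson
sampling for `t` remaining steps, as a function of the posterior `p`:
at each step the risky arm (mean `p*h+(1-p)*l`) is pulled with probability `fTS ε p`,
in which case the posterior is updated with one noisy risky-arm sample. -/
noncomputable def Kval (σ h l s β ε : ℝ) : ℕ → ℝ → ℝ
  | 0, _ => 0
  | t + 1, p =>
      fTS ε p * (p * h + (1 - p) * l) + (1 - fTS ε p) * s +
        β * (fTS ε p * (∫ x, Kval σ h l s β ε t (post σ h l p x) * obsDens σ h l p x) +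
          (1 - fTS ε p) * Kval σ h l s β ε t p)

/-!
Write `E[φ(p')]` for the expectation of `φ` at the posterior `p'` obtained from `p` by one
observation of the risky arm. The one-step reward `r(q) = f(q)(q h + (1 - q) l) + (1 - f(q)) s`
is a quadratic in `q` with leading coefficient `(1 - ε)(h - l) > 0`, so by the martingale property
`E[r(p')] = r(p) + (1 - ε)(h - l) Var(p')`, and `Var(p') > 0` because high observations push the
posterior above `p`. Writing `K_{t+1}(q) = r(q) + β K_t(q) + β f(q) (E[K_t(p')] - K_t(q))`, the
inequality `K_t ≤ E[K_t(p')]` propagates by induction on the horizon (the last summand only gains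
from the extra observation), and at each step the reward term contributes the strict gain.
-/

open Set Filter

theorem lik_pos (σ m x : ℝ) : 0 < lik σ m x := Real.exp_pos _

@[fun_prop]
theorem continuous_lik (σ m : ℝ) : Continuous (lik σ m) := by
  unfold lik; fun_prop

theorem lik_eq_exp_neg_mul_sq (σ m x : ℝ) :
    lik σ m x = Real.exp (-(2 * σ ^ 2)⁻¹ * (x - m) ^ 2) := by
  rw [lik, neg_div, neg_mul, div_eq_inv_mul]

theorem integrable_lik {σ : ℝ} (hσ : 0 < σ) (m : ℝ) : Integrable (lik σ m) := by
  rw [funext (lik_eq_exp_neg_mul_sq σ m)]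
  exact (integrable_exp_neg_mul_sq (by positivity)).comp_sub_right m

theorem integral_lik (σ m : ℝ) :
    ∫ x, lik σ m x = Real.sqrt (2 * Real.pi * σ ^ 2) := by
  rw [funext (lik_eq_exp_neg_mul_sq σ m),
    integral_sub_right_eq_self (fun x => Real.exp (-(2 * σ ^ 2)⁻¹ * x ^ 2)) m,
    integral_gaussian, div_inv_eq_mul]
  ring_nf

theorem lik_lt_lik {σ h l x : ℝ} (hσ : 0 < σ) (hlh : l < h) (hx : (h + l) / 2 < x) :
    lik σ l x < lik σ h x := by
  refine Real.exp_lt_exp.2 (div_lt_div_of_pos_right ?_ (by positivity))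
  nlinarith

section Posterior

variable {σ h l p : ℝ}

theorem evidence_pos (hp : p ∈ Ioo 0 1) (x : ℝ) :
    0 < p * lik σ h x + (1 - p) * lik σ l x :=
  add_pos (mul_pos hp.1 (lik_pos σ h x)) (mul_pos (sub_pos.2 hp.2) (lik_pos σ l x))

theorem post_mem_Ioo (hp : p ∈ Ioo 0 1) (x : ℝ) : post σ h l p x ∈ Ioo 0 1 := by
  have hev := evidence_pos (σ := σ) (h := h) (l := l) hp x
  refine ⟨div_pos (mul_pos hp.1 (lik_pos σ h x)) hev, (div_lt_one hev).2 ?_⟩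
  linarith [mul_pos (sub_pos.2 hp.2) (lik_pos σ l x)]

theorem lt_post_of_lik_lt (hp : p ∈ Ioo 0 1) {x : ℝ} (hx : lik σ l x < lik σ h x) :
    p < post σ h l p x := by
  rw [post, lt_div_iff₀ (evidence_pos hp x)]
  nlinarith [mul_pos (mul_pos hp.1 (sub_pos.2 hp.2)) (sub_pos.2 hx)]

theorem continuous_post (hp : p ∈ Ioo 0 1) : Continuous (post σ h l p) := by
  unfold post
  exact Continuous.div (by fun_prop) (by fun_prop)
    fun x => (evidence_pos hp x).ne'

theorem obsDens_pos (hσ : 0 < σ) (hp : p ∈ Ioo 0 1) (x : ℝ) : 0 < obsDens σ h l p x :=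
  div_pos (evidence_pos hp x) (Real.sqrt_pos.2 (by positivity))

theorem obsDens_le (hp : p ∈ Ioo 0 1) (x : ℝ) :
    obsDens σ h l p x ≤ (lik σ h x + lik σ l x) / Real.sqrt (2 * Real.pi * σ ^ 2) := by
  refine div_le_div_of_nonneg_right ?_ (Real.sqrt_nonneg _)
  nlinarith [lik_pos σ h x, lik_pos σ l x, hp.1, hp.2]

theorem integrable_obsDens (hσ : 0 < σ) (p : ℝ) : Integrable (obsDens σ h l p) :=
  (((integrable_lik hσ h).const_mul p).add ((integrable_lik hσ l).const_mul (1 - p))).div_const _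

theorem integral_obsDens (hσ : 0 < σ) (p : ℝ) : ∫ x, obsDens σ h l p x = 1 := by
  have hZ : Real.sqrt (2 * Real.pi * σ ^ 2) ≠ 0 := (Real.sqrt_pos.2 (by positivity)).ne'
  unfold obsDens
  rw [integral_div, integral_add ((integrable_lik hσ h).const_mul p)
    ((integrable_lik hσ l).const_mul (1 - p)), integral_const_mul, integral_const_mul,
    integral_lik, integral_lik, ← add_mul, add_sub_cancel, one_mul, div_self hZ]

theorem post_mul_obsDens (hp : p ∈ Ioo 0 1) (x : ℝ) :
    post σ h l p x * obsDens σ h l p x = p * lik σ h x / Real.sqrt (2 * Real.pi * σ ^ 2) :=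
  div_mul_div_cancel₀ (evidence_pos hp x).ne'

end Posterior

/-- `expectPost σ h l φ q` is `E[φ(q')]`, where `q'` is the posterior after one observation of
the risky arm from prior `q`. -/
noncomputable def expectPost (σ h l : ℝ) (φ : ℝ → ℝ) (q : ℝ) : ℝ :=
  ∫ x, φ (post σ h l q x) * obsDens σ h l q x

def BddContinuousOnUnit (φ : ℝ → ℝ) : Prop :=
  ContinuousOn φ (Ioo 0 1) ∧ ∃ C, ∀ q ∈ Ioo (0 : ℝ) 1, |φ q| ≤ C

namespace BddContinuousOnUnit

variable {φ ψ : ℝ → ℝ}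

theorem of_continuous (hφ : Continuous φ) : BddContinuousOnUnit φ := by
  obtain ⟨C, hC⟩ := isCompact_Icc.exists_bound_of_continuousOn (hφ.continuousOn (s := Icc 0 1))
  exact ⟨hφ.continuousOn, C, fun q hq => hC q (Ioo_subset_Icc_self hq)⟩

theorem add (hφ : BddContinuousOnUnit φ) (hψ : BddContinuousOnUnit ψ) :
    BddContinuousOnUnit fun q => φ q + ψ q := by
  obtain ⟨hφc, C, hC⟩ := hφ
  obtain ⟨hψc, D, hD⟩ := hψ
  exact ⟨hφc.add hψc, C + D, fun q hq => (abs_add_le _ _).trans (add_le_add (hC q hq) (hD q hq))⟩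

theorem sub (hφ : BddContinuousOnUnit φ) (hψ : BddContinuousOnUnit ψ) :
    BddContinuousOnUnit fun q => φ q - ψ q := by
  obtain ⟨hφc, C, hC⟩ := hφ
  obtain ⟨hψc, D, hD⟩ := hψ
  exact ⟨hφc.sub hψc, C + D, fun q hq => (abs_sub _ _).trans (add_le_add (hC q hq) (hD q hq))⟩

theorem mul (hφ : BddContinuousOnUnit φ) (hψ : BddContinuousOnUnit ψ) :
    BddContinuousOnUnit fun q => φ q * ψ q := by
  obtain ⟨hφc, C, hC⟩ := hφ
  obtain ⟨hψc, D, hD⟩ := hψ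
  refine ⟨hφc.mul hψc, C * D, fun q hq => ?_⟩
  rw [abs_mul]
  exact mul_le_mul (hC q hq) (hD q hq) (abs_nonneg _) ((abs_nonneg _).trans (hC q hq))

variable {σ h l p : ℝ}

theorem integrable_comp_post_mul_obsDens (hφ : BddContinuousOnUnit φ) (hσ : 0 < σ)
    (hp : p ∈ Ioo 0 1) : Integrable fun x => φ (post σ h l p x) * obsDens σ h l p x := by
  obtain ⟨hφc, C, hC⟩ := hφ
  refine (integrable_obsDens hσ p).bdd_mul (c := C) ?_ (Eventually.of_forall fun x => ?_)
  · exact (hφc.comp_continuous (continuous_post hp) (post_mem_Ioo hp)).aestronglyMeasurable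
  · exact hC _ (post_mem_Ioo hp x)

theorem abs_expectPost_le (hσ : 0 < σ) (hp : p ∈ Ioo 0 1) {C : ℝ}
    (hC : ∀ q ∈ Ioo (0 : ℝ) 1, |φ q| ≤ C) : |expectPost σ h l φ p| ≤ C := by
  have hbound : ∀ x, ‖φ (post σ h l p x) * obsDens σ h l p x‖ ≤ C * obsDens σ h l p x := by
    intro x
    rw [Real.norm_eq_abs, abs_mul, abs_of_pos (obsDens_pos hσ hp x)]
    exact mul_le_mul_of_nonneg_right (hC _ (post_mem_Ioo hp x)) (obsDens_pos hσ hp x).le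
  calc |expectPost σ h l φ p| ≤ ∫ x, C * obsDens σ h l p x :=
        norm_integral_le_of_norm_le ((integrable_obsDens hσ p).const_mul C)
          (Eventually.of_forall hbound)
    _ = C := by rw [integral_const_mul, integral_obsDens hσ, mul_one]

theorem continuousOn_expectPost (hφ : BddContinuousOnUnit φ) (hσ : 0 < σ) :
    ContinuousOn (expectPost σ h l φ) (Ioo 0 1) := by
  obtain ⟨hφc, C, hC⟩ := hφ
  intro q₀ hq₀
  have hC0 : 0 ≤ C := (abs_nonneg _).trans (hC q₀ hq₀)
  have hnear : ∀ᶠ q in nhds q₀, q ∈ Ioo (0 : ℝ) 1 := isOpen_Ioo.eventually_mem hq₀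
  refine ContinuousAt.continuousWithinAt <| continuousAt_of_dominated
    (bound := fun x => C * ((lik σ h x + lik σ l x) / Real.sqrt (2 * Real.pi * σ ^ 2)))
    ?_ ?_ ?_ (Eventually.of_forall fun x => ?_)
  · filter_upwards [hnear] with q hq
    exact ((hφc.comp_continuous (continuous_post hq) (post_mem_Ioo hq)).mul
      (by unfold obsDens; fun_prop)).aestronglyMeasurable
  · filter_upwards [hnear] with q hq
    refine Eventually.of_forall fun x => ?_
    rw [Real.norm_eq_abs, abs_mul, abs_of_pos (obsDens_pos hσ hq x)]
    exact mul_le_mul (hC _ (post_mem_Ioo hq x)) (obsDens_le hq x) (obsDens_pos hσ hq x).le hC0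
  · exact (((integrable_lik hσ h).add (integrable_lik hσ l)).div_const _).const_mul C
  · have hpost : ContinuousAt (fun q => post σ h l q x) q₀ := by
      unfold post
      exact ContinuousAt.div (by fun_prop) (by fun_prop) (evidence_pos hq₀ x).ne'
    refine ContinuousAt.mul ?_ (by unfold obsDens; fun_prop)
    exact (hφc.continuousAt (isOpen_Ioo.mem_nhds (post_mem_Ioo hq₀ x))).comp
      (f := fun q => post σ h l q x) hpost

theorem expectPost (hφ : BddContinuousOnUnit φ) (hσ : 0 < σ) :
    BddContinuousOnUnit (expectPost σ h l φ) := by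
  obtain ⟨C, hC⟩ := hφ.2
  exact ⟨hφ.continuousOn_expectPost hσ, C, fun q hq => abs_expectPost_le hσ hq hC⟩

end BddContinuousOnUnit

section Expectation

variable {σ h l p : ℝ}

theorem expectPost_add (hσ : 0 < σ) (hp : p ∈ Ioo 0 1) {φ ψ : ℝ → ℝ}
    (hφ : BddContinuousOnUnit φ) (hψ : BddContinuousOnUnit ψ) :
    expectPost σ h l (fun q => φ q + ψ q) p = expectPost σ h l φ p + expectPost σ h l ψ p := by
  simp only [expectPost, add_mul]
  exact integral_add (hφ.integrable_comp_post_mul_obsDens hσ hp)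
    (hψ.integrable_comp_post_mul_obsDens hσ hp)

theorem expectPost_const_mul (c : ℝ) (φ : ℝ → ℝ) :
    expectPost σ h l (fun q => c * φ q) p = c * expectPost σ h l φ p := by
  simp only [expectPost, mul_assoc, integral_const_mul]

theorem expectPost_const (hσ : 0 < σ) (c : ℝ) : expectPost σ h l (fun _ => c) p = c := by
  rw [expectPost, integral_const_mul, integral_obsDens hσ, mul_one]

theorem expectPost_id (hσ : 0 < σ) (hp : p ∈ Ioo 0 1) : expectPost σ h l id p = p := by
  have hZ : Real.sqrt (2 * Real.pi * σ ^ 2) ≠ 0 := (Real.sqrt_pos.2 (by positivity)).ne'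
  simp only [expectPost, id, post_mul_obsDens hp]
  rw [integral_div, integral_const_mul, integral_lik, mul_div_assoc, div_self hZ, mul_one]

theorem expectPost_sub_self (hσ : 0 < σ) (hp : p ∈ Ioo 0 1) :
    expectPost σ h l (fun q => q - p) p = 0 := by
  simp only [sub_eq_add_neg]
  rw [expectPost_add hσ hp (.of_continuous continuous_id') (.of_continuous continuous_const)]
  rw [show expectPost σ h l (fun q => q) p = p from expectPost_id hσ hp, expectPost_const hσ,
    add_neg_cancel]

/-- The variance of the posterior `p'` around the prior `p = E[p']`. -/
noncomputable def postVar (σ h l p : ℝ) : ℝ := expectPost σ h l (fun q => (q - p) ^ 2) p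

theorem postVar_nonneg (hσ : 0 < σ) (hp : p ∈ Ioo 0 1) : 0 ≤ postVar σ h l p :=
  integral_nonneg fun x => mul_nonneg (sq_nonneg _) (obsDens_pos hσ hp x).le

theorem postVar_pos (hσ : 0 < σ) (hlh : l < h) (hp : p ∈ Ioo 0 1) : 0 < postVar σ h l p := by
  have hint : BddContinuousOnUnit fun q => (q - p) ^ 2 := .of_continuous (by fun_prop)
  rw [postVar, expectPost, integral_pos_iff_support_of_nonneg
    (fun x => mul_nonneg (sq_nonneg _) (obsDens_pos hσ hp x).le)
    (hint.integrable_comp_post_mul_obsDens hσ hp)]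
  have hsupp : Ioi ((h + l) / 2) ⊆
      Function.support fun x => (post σ h l p x - p) ^ 2 * obsDens σ h l p x := fun x hx =>
    (mul_pos (pow_pos (sub_pos.2 (lt_post_of_lik_lt hp (lik_lt_lik hσ hlh hx))) 2)
      (obsDens_pos hσ hp x)).ne'
  exact (measure_mono hsupp).trans_lt' (by simp)

theorem expectPost_quadratic (hσ : 0 < σ) (hp : p ∈ Ioo 0 1) (a b c : ℝ) :
    expectPost σ h l (fun q => a + (b * (q - p) + c * (q - p) ^ 2)) p =
      a + c * postVar σ h l p := by
  rw [expectPost_add hσ hp (.of_continuous continuous_const) (.of_continuous (by fun_prop)),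
    expectPost_add hσ hp (.of_continuous (by fun_prop)) (.of_continuous (by fun_prop)),
    expectPost_const hσ, expectPost_const_mul, expectPost_const_mul, expectPost_sub_self hσ hp,
    mul_zero, zero_add, postVar]

end Expectation

noncomputable def reward (h l s ε q : ℝ) : ℝ :=
  fTS ε q * (q * h + (1 - q) * l) + (1 - fTS ε q) * s

noncomputable def bellman (σ h l s β ε : ℝ) (K : ℝ → ℝ) (q : ℝ) : ℝ :=
  reward h l s ε q + β * (fTS ε q * expectPost σ h l K q + (1 - fTS ε q) * K q)

section ValueFunction

variable {σ h l s β ε p : ℝ}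

@[fun_prop]
theorem continuous_fTS (ε : ℝ) : Continuous (fTS ε) := by
  unfold fTS; fun_prop

theorem continuous_reward (h l s ε : ℝ) : Continuous (reward h l s ε) := by
  unfold reward; fun_prop

theorem fTS_mem_Icc (hε0 : 0 ≤ ε) (hε1 : ε < 1) {q : ℝ} (hq : q ∈ Ioo 0 1) :
    fTS ε q ∈ Icc 0 1 := by
  obtain ⟨hq0, hq1⟩ := hq
  constructor <;> unfold fTS <;> nlinarith

theorem reward_eq_taylor (h l s ε p q : ℝ) :
    reward h l s ε q = reward h l s ε p +
      ((ε * (h - l) + (1 - ε) * (l - s) + 2 * ((1 - ε) * (h - l)) * p) * (q - p) +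
        (1 - ε) * (h - l) * (q - p) ^ 2) := by
  unfold reward fTS; ring

theorem expectPost_reward (hσ : 0 < σ) (hp : p ∈ Ioo 0 1) :
    expectPost σ h l (reward h l s ε) p =
      reward h l s ε p + (1 - ε) * (h - l) * postVar σ h l p := by
  rw [← expectPost_quadratic hσ hp]
  exact congrArg (expectPost σ h l · p) (funext (reward_eq_taylor h l s ε p))

theorem Kval_succ (t : ℕ) :
    Kval σ h l s β ε (t + 1) = bellman σ h l s β ε (Kval σ h l s β ε t) := rfl

theorem bddContinuousOnUnit_Kval (hσ : 0 < σ) (t : ℕ) :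
    BddContinuousOnUnit (Kval σ h l s β ε t) := by
  induction t with
  | zero => exact .of_continuous continuous_const
  | succ t ih =>
    have hf : BddContinuousOnUnit (fTS ε) := .of_continuous (continuous_fTS ε)
    rw [Kval_succ]
    exact (BddContinuousOnUnit.of_continuous (continuous_reward h l s ε)).add <|
      (BddContinuousOnUnit.of_continuous continuous_const).mul <|
        (hf.mul (ih.expectPost hσ)).add
          ((BddContinuousOnUnit.of_continuous continuous_const).sub hf |>.mul ih)

theorem bellman_add_postVar_le (hσ : 0 < σ) (hβ : 0 ≤ β) (hε0 : 0 ≤ ε) (hε1 : ε < 1)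
    {K : ℝ → ℝ} (hK : BddContinuousOnUnit K) (hKE : ∀ q ∈ Ioo 0 1, K q ≤ expectPost σ h l K q)
    (hp : p ∈ Ioo 0 1) :
    bellman σ h l s β ε K p + (1 - ε) * (h - l) * postVar σ h l p ≤
      expectPost σ h l (bellman σ h l s β ε K) p := by
  set gain : ℝ → ℝ := fun q => fTS ε q * (expectPost σ h l K q - K q)
  have hgain : BddContinuousOnUnit gain :=
    (BddContinuousOnUnit.of_continuous (continuous_fTS ε)).mul ((hK.expectPost hσ).sub hK)
  have hgain_nonneg : 0 ≤ expectPost σ h l gain p := integral_nonneg fun x =>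
    have hq := post_mem_Ioo (σ := σ) (h := h) (l := l) hp x
    mul_nonneg (mul_nonneg (fTS_mem_Icc hε0 hε1 hq).1 (sub_nonneg.2 (hKE _ hq)))
      (obsDens_pos hσ hp x).le
  have hsplit : bellman σ h l s β ε K = fun q => reward h l s ε q + (β * K q + β * gain q) :=
    funext fun q => by unfold bellman; ring
  have hE : expectPost σ h l (bellman σ h l s β ε K) p = reward h l s ε p +
      (1 - ε) * (h - l) * postVar σ h l p +
        (β * expectPost σ h l K p + β * expectPost σ h l gain p) := by
    rw [hsplit, expectPost_add hσ hp (.of_continuous (continuous_reward h l s ε))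
      ((BddContinuousOnUnit.of_continuous continuous_const).mul hK |>.add
        ((BddContinuousOnUnit.of_continuous continuous_const).mul hgain)),
      expectPost_reward hσ hp, expectPost_add hσ hp
        ((BddContinuousOnUnit.of_continuous continuous_const).mul hK)
        ((BddContinuousOnUnit.of_continuous continuous_const).mul hgain),
      expectPost_const_mul, expectPost_const_mul]
  rw [hE]
  obtain ⟨hf0, hf1⟩ := fTS_mem_Icc hε0 hε1 hp
  unfold bellman
  nlinarith [mul_nonneg (mul_nonneg hβ (sub_nonneg.2 hf1)) (sub_nonneg.2 (hKE p hp)),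
    mul_nonneg hβ hgain_nonneg]

theorem Kval_le_expectPost (hσ : 0 < σ) (hlh : l < h) (hβ : 0 ≤ β) (hε0 : 0 ≤ ε) (hε1 : ε < 1)
    (t : ℕ) : ∀ q ∈ Ioo 0 1, Kval σ h l s β ε t q ≤ expectPost σ h l (Kval σ h l s β ε t) q := by
  induction t with
  | zero => intro q _; simp [Kval, expectPost]
  | succ t ih =>
    intro q hq
    rw [Kval_succ]
    have hvar : 0 ≤ (1 - ε) * (h - l) * postVar σ h l q :=
      mul_nonneg (mul_nonneg (sub_nonneg.2 hε1.le) (sub_nonneg.2 hlh.le)) (postVar_nonneg hσ hq)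
    linarith [bellman_add_postVar_le (s := s) hσ hβ hε0 hε1 (bddContinuousOnUnit_Kval hσ t) ih hq]

end ValueFunction

theorem value_of_information_general (σ h l s β ε : ℝ) (hσ : 0 < σ)
    (hls : l < s) (hsh : s < h) (hβ0 : 0 < β)
    (hε0 : 0 ≤ ε) (hε1 : ε < 1)
    (T : ℕ) (hT : 1 ≤ T) (p : ℝ) (hp : p ∈ Set.Ioo (0:ℝ) 1) :
    Kval σ h l s β ε T p <
      ∫ x, Kval σ h l s β ε T (post σ h l p x) * obsDens σ h l p x := by
  obtain ⟨t, rfl⟩ := Nat.exists_eq_add_of_le' hT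
  have hlh : l < h := hls.trans hsh
  have hgain : 0 < (1 - ε) * (h - l) * postVar σ h l p :=
    mul_pos (mul_pos (sub_pos.2 hε1) (sub_pos.2 hlh)) (postVar_pos hσ hlh hp)
  calc Kval σ h l s β ε (t + 1) p
      < bellman σ h l s β ε (Kval σ h l s β ε t) p + (1 - ε) * (h - l) * postVar σ h l p :=
        lt_add_of_pos_right _ hgain
    _ ≤ expectPost σ h l (bellman σ h l s β ε (Kval σ h l s β ε t)) p :=
        bellman_add_postVar_le hσ hβ0.le hε0 hε1 (bddContinuousOnUnit_Kval hσ t)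
          (Kval_le_expectPost hσ hlh hβ0.le hε0 hε1 t) hp

/-- one additional observation of the risky arm strictly increases the
expected cumulative discounted reward: `E[K(p')] > K(p)` for every prior `p ∈ (0,1)`
and horizon `T ≥ 1`. -/
theorem value_of_information (σ h l s β ε : ℝ) (hσ : 0 < σ)
    (hls : l < s) (hsh : s < h) (hβ0 : 0 < β) (hβ1 : β ≤ 1)
    (hε0 : 0 ≤ ε) (hε1 : ε < 1)
    (T : ℕ) (hT : 1 ≤ T) (p : ℝ) (hp : p ∈ Set.Ioo (0:ℝ) 1) :
    Kval σ h l s β ε T p <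
      ∫ x, Kval σ h l s β ε T (post σ h l p x) * obsDens σ h l p x :=
  value_of_information_general σ h l s β ε hσ hls hsh hβ0 hε0 hε1 T hT p hp
end
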